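/- The radical of the cocycle consists exactly of the constants: for f in LaurentSeries ℂ, one has Res(g * D f) = 0 for every g in LaurentSeries ℂ if and only if f.coeff n = 0 for all n ≠ 0. Hence the antisymmetric form c(f,g) = Res(g * D f) descends to a nondegenerate form on LaurentSeries ℂ modulo constants. -/

import Mathlib

open HahnSeries

/-- The formal derivative of Laurent series, defined coefficientwise by
`(D f).coeff n = (n + 1) • f.coeff (n + 1)`. -/
noncomputable def D : LaurentSeries ℂ →ₗ[ℂ] LaurentSeries ℂ where
  toFun f :=
    { coeff := fun n => (n + 1) • f.coeff (n + 1)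
      isPWO_support' := by
        have hmono : MonotoneOn (fun n : ℤ => n - 1) f.support := by
          intro a _ b _ h
          simpa using sub_le_sub_right h 1
        refine Set.IsPWO.mono (f.isPWO_support.image_of_monotoneOn hmono) ?_
        intro n hn
        have hf : f.coeff (n + 1) ≠ 0 := by
          intro h
          simp [h] at hn
        exact ⟨n + 1, hf, by ring⟩ }
  map_add' f g := by
    ext n
    simp [smul_add]
  map_smul' c f := by
    ext n
    simp
    ring

/-- The residue of a formal Laurent series: the coefficient of `z⁻¹`. -/
noncomputable def Res (f : LaurentSeries ℂ) : ℂ := f.coeff (-1)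

theorem D_coeff (f : LaurentSeries ℂ) (n : ℤ) :
    (D f).coeff n = (n + 1) • f.coeff (n + 1) := rfl

theorem D_eq_zero_iff (f : LaurentSeries ℂ) : D f = 0 ↔ ∀ n ≠ 0, f.coeff n = 0 := by
  refine ⟨fun hD n hn => ?_, fun hf => ?_⟩
  · have hcoeff : (n : ℂ) * f.coeff n = 0 := by
      simpa [D_coeff] using congrArg (coeff · (n - 1)) hD
    exact (mul_eq_zero.mp hcoeff).resolve_left (Int.cast_ne_zero.mpr hn)
  · ext n
    rcases eq_or_ne (n + 1) 0 with hn | hn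
    · simp [D_coeff, hn]
    · simp [D_coeff, hf _ hn]

theorem Res_single_mul (h : LaurentSeries ℂ) (n : ℤ) : Res (single (-n - 1) 1 * h) = h.coeff n := by
  rw [Res, coeff_single_mul, one_mul]
  congr 1
  ring

theorem forall_Res_mul_eq_zero_iff (h : LaurentSeries ℂ) :
    (∀ g : LaurentSeries ℂ, Res (g * h) = 0) ↔ h = 0 := by
  refine ⟨fun hRes => ?_, fun h0 g => by simp [h0, Res]⟩
  ext n
  simpa [Res_single_mul] using hRes (single (-n - 1) 1)

theorem cocycle_radical_eq_constants (f : LaurentSeries ℂ) :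
    (∀ g : LaurentSeries ℂ, Res (g * D f) = 0) ↔ ∀ n ≠ 0, f.coeff n = 0 :=
  (forall_Res_mul_eq_zero_iff (D f)).trans (D_eq_zero_iff f)
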